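/- arXiv:0810.0477 — 2 statements merged into one kernel-verified Lean document; each statement's English description precedes it below -/
import Mathlib

section
/- Assume 0 < μν < λ²m². For every z₁ ∈ ℂ, the point (z₁, 0, 0, 0, 0) ∈ ℂ⁵ satisfies V = λ²m⁴, and λ²m⁴ > 2μνm² − μ²ν²/λ²; hence this extremum of V, where z₁ is a pseudomodulus and z₂,…,z₅ vanish, has strictly higher energy than the global minimum value 2μνm² − μ²ν²/λ². -/
/-!
On the branch `z₂ = ⋯ = z₅ = 0` every F-term vanishes except `∂W/∂z₁ = λ(z₄z₅ − m²) = −λm²`,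
so `V = λ²m⁴` independently of `z₁`. The gap to the global minimum is a perfect square:
`λ²m⁴ − (2μνm² − μ²ν²/λ²) = (λ²m² − μν)² / λ²`, which is positive as soon as `μν ≠ λ²m²`.
-/

theorem fderiv_apply_single_of_hasFDerivAt {𝕜 ι F : Type*} [NontriviallyNormedField 𝕜]
    [Fintype ι] [DecidableEq ι] [NormedAddCommGroup F] [NormedSpace 𝕜 F]
    {f : (ι → 𝕜) → F} {g : ι → F} {z : ι → 𝕜}
    (hf : HasFDerivAt f (∑ i, (ContinuousLinearMap.proj (R := 𝕜) i).smulRight (g i)) z) (j : ι) :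
    fderiv 𝕜 f z (Pi.single j 1) = g j := by
  simp [hf.fderiv, Pi.single_apply]

namespace CDFM

def superpotential (lam mu nu m sig : ℂ) (z : Fin 5 → ℂ) : ℂ :=
  lam * z 0 * (z 3 * z 4 - m ^ 2) + mu * z 1 * z 3 + nu * z 2 * z 4 + sig * z 4 ^ 3

def gradient (lam mu nu m sig : ℂ) (z : Fin 5 → ℂ) : Fin 5 → ℂ :=
  ![lam * (z 3 * z 4 - m ^ 2), mu * z 3, nu * z 4, lam * z 0 * z 4 + mu * z 1,
    lam * z 0 * z 3 + nu * z 2 + 3 * sig * z 4 ^ 2]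

variable (lam mu nu m sig : ℂ)

theorem hasFDerivAt_superpotential (z : Fin 5 → ℂ) :
    HasFDerivAt (superpotential lam mu nu m sig)
      (∑ i, (ContinuousLinearMap.proj (R := ℂ) i).smulRight (gradient lam mu nu m sig z i)) z := by
  have coord (i : Fin 5) := hasFDerivAt_apply (𝕜 := ℂ) i z
  have h := ((((coord 0).const_mul lam).mul (((coord 3).mul (coord 4)).sub_const (m ^ 2))).add
    (((coord 1).const_mul mu).mul (coord 3))).add (((coord 2).const_mul nu).mul (coord 4)) |>.add
    (((coord 4).pow 3).const_mul sig)
  refine h.congr_fderiv ?_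
  ext v
  simp only [add_apply, smul_apply, ContinuousLinearMap.proj_apply, ContinuousLinearMap.smulRight_apply,
    smul_eq_mul, nsmul_eq_mul, Pi.mul_apply, gradient, Fin.sum_univ_five, Matrix.cons_val]
  ring

theorem fderiv_superpotential_single (z : Fin 5 → ℂ) (i : Fin 5) :
    fderiv ℂ (superpotential lam mu nu m sig) z (Pi.single i 1) = gradient lam mu nu m sig z i :=
  fderiv_apply_single_of_hasFDerivAt (hasFDerivAt_superpotential lam mu nu m sig z) i

theorem gradient_origin_branch (z₁ : ℂ) :
    gradient lam mu nu m sig ![z₁, 0, 0, 0, 0] = ![-(lam * m ^ 2), 0, 0, 0, 0] := by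
  ext i
  fin_cases i <;> simp [gradient]

end CDFM

theorem sub_div_sq_lt_of_mul_lt {lam mu nu m : ℝ} (hlam : lam ≠ 0)
    (hcond : mu * nu < lam ^ 2 * m ^ 2) :
    2 * mu * nu * m ^ 2 - mu ^ 2 * nu ^ 2 / lam ^ 2 < lam ^ 2 * m ^ 4 := by
  have gap : lam ^ 2 * m ^ 4 - (2 * mu * nu * m ^ 2 - mu ^ 2 * nu ^ 2 / lam ^ 2) =
      (lam ^ 2 * m ^ 2 - mu * nu) ^ 2 / lam ^ 2 := by
    field_simp
    ring
  have : 0 < (lam ^ 2 * m ^ 2 - mu * nu) ^ 2 / lam ^ 2 := by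
    have := sub_ne_zero.2 hcond.ne'
    positivity
  linarith

theorem cdfm_origin_branch_higher_energy_general
    (lam mu nu m sig : ℝ)
    (hlam : 0 < lam)
    (hcond : mu * nu < lam ^ 2 * m ^ 2)
    (W : (Fin 5 → ℂ) → ℂ)
    (hW : ∀ z, W z = (lam : ℂ) * z 0 * (z 3 * z 4 - (m : ℂ) ^ 2) +
      (mu : ℂ) * z 1 * z 3 + (nu : ℂ) * z 2 * z 4 + (sig : ℂ) * (z 4) ^ 3)
    (V : (Fin 5 → ℂ) → ℝ)
    (hV : ∀ z, V z = ∑ i, ‖fderiv ℂ W z (Pi.single i 1)‖ ^ 2) :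
    (∀ z1 : ℂ, V ![z1, 0, 0, 0, 0] = lam ^ 2 * m ^ 4) ∧
    2 * mu * nu * m ^ 2 - mu ^ 2 * nu ^ 2 / lam ^ 2 < lam ^ 2 * m ^ 4 := by
  obtain rfl : W = CDFM.superpotential lam mu nu m sig := funext hW
  refine ⟨fun z1 => ?_, sub_div_sq_lt_of_mul_lt hlam.ne' hcond⟩
  simp only [hV, CDFM.fderiv_superpotential_single, CDFM.gradient_origin_branch,
    Fin.sum_univ_five]
  simp [mul_pow, ← pow_mul]

/-- CDFM model with `0 < μν < λ²m²`. For every `z₁ ∈ ℂ`, the point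
`(z₁, 0, 0, 0, 0)` satisfies `V = λ²m⁴`, and `λ²m⁴ > 2μνm² − μ²ν²/λ²`; hence this extremum,
where `z₁` is a pseudomodulus and `z₂,…,z₅` vanish, has strictly higher energy than the
global minimum value `2μνm² − μ²ν²/λ²`. -/
theorem cdfm_origin_branch_higher_energy
    (lam mu nu m sig : ℝ)
    (hlam : 0 < lam) (hmu : 0 < mu) (hnu : 0 < nu) (hm : 0 < m) (hsig : 0 < sig)
    (hcond : mu * nu < lam ^ 2 * m ^ 2)
    (W : (Fin 5 → ℂ) → ℂ)
    (hW : ∀ z, W z = (lam : ℂ) * z 0 * (z 3 * z 4 - (m : ℂ) ^ 2) +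
      (mu : ℂ) * z 1 * z 3 + (nu : ℂ) * z 2 * z 4 + (sig : ℂ) * (z 4) ^ 3)
    (V : (Fin 5 → ℂ) → ℝ)
    (hV : ∀ z, V z = ∑ i, ‖fderiv ℂ W z (Pi.single i 1)‖ ^ 2) :
    (∀ z1 : ℂ, V ![z1, 0, 0, 0, 0] = lam ^ 2 * m ^ 4) ∧
    2 * mu * nu * m ^ 2 - mu ^ 2 * nu ^ 2 / lam ^ 2 < lam ^ 2 * m ^ 4 :=
  cdfm_origin_branch_higher_energy_general lam mu nu m sig hlam hcond W hW V hV
end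

section
/- Assume μν < λ²m². Every global minimizer of the Mz² model potential, i.e. every z ∈ ℂ⁷ with V(z) = 2μνm² − μ²ν²/λ², satisfies z₄ ≠ 0 and z₅ ≠ 0 (equality in the lower bound forces z₄z₅ = m² − μν/λ² ≠ 0); hence the R-symmetry, under which z₄ and z₅ carry nonzero R-charges, is spontaneously broken at every point of the vacuum space. -/
/-! Only the F-terms of `z₁, z₂, z₃` matter. With `w = z₄z₅` and
`c = μν/λ²`, the sum of their squares is
`2μνm² − μνc + λ²(|w| − (m² − c))² + (μ|z₄| − ν|z₅|)² + 2λ²m²(|w| − Re w)`,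
so at a vacuum `|w| = m² − c` and `Re w = |w|`, i.e. `w = m² − c`, which is nonzero since
`μν < λ²m²`. -/

open Complex

theorem fderiv_apply_eq_of_add_smul {𝕜 E F : Type*} [NontriviallyNormedField 𝕜]
    [NormedAddCommGroup E] [NormedSpace 𝕜 E] [NormedAddCommGroup F] [NormedSpace 𝕜 F]
    {f : E → F} {x v : E} {c : F} (hf : DifferentiableAt 𝕜 f x)
    (hline : ∀ t : 𝕜, f (x + t • v) = f x + t • c) :
    fderiv 𝕜 f x v = c := by
  rw [← hf.lineDeriv_eq_fderiv, lineDeriv, funext hline, deriv_const_add,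
    deriv_smul_const differentiableAt_id, deriv_id'', one_smul]

theorem Complex.norm_sub_ofReal_sq (w : ℂ) (x : ℝ) :
    ‖w - x‖ ^ 2 = (‖w‖ - x) ^ 2 + 2 * x * (‖w‖ - w.re) := by
  have hw : ‖w‖ ^ 2 = w.re * w.re + w.im * w.im := by rw [Complex.sq_norm, normSq_apply]
  rw [Complex.sq_norm, normSq_apply, sub_re, sub_im, ofReal_re, ofReal_im]
  linear_combination -hw

theorem Complex.eq_ofReal_norm_of_re_eq_norm {w : ℂ} (h : w.re = ‖w‖) : w = (‖w‖ : ℂ) := by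
  rw [← h]; exact eq_re_of_ofReal_le (re_eq_norm.1 h)

theorem fTerm_eq_min_add_sos {lam : ℝ} (hlam : lam ≠ 0) (mu nu x : ℝ) (u v : ℂ) :
    ‖(lam : ℂ) * (u * v - x)‖ ^ 2 + ‖(mu : ℂ) * u‖ ^ 2 + ‖(nu : ℂ) * v‖ ^ 2 =
      2 * mu * nu * x - mu ^ 2 * nu ^ 2 / lam ^ 2 +
        (lam ^ 2 * (‖u * v‖ - (x - mu * nu / lam ^ 2)) ^ 2 + (mu * ‖u‖ - nu * ‖v‖) ^ 2 +
          2 * lam ^ 2 * x * (‖u * v‖ - (u * v).re)) := by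
  simp only [norm_mul, mul_pow, norm_real, Real.norm_eq_abs, sq_abs]
  rw [← norm_mul, norm_sub_ofReal_sq, norm_mul]
  field_simp
  ring

theorem mul_eq_of_fTerm_le {lam mu nu x : ℝ} {u v : ℂ} (hlam : lam ≠ 0) (hx : 0 < x)
    (h : ‖(lam : ℂ) * (u * v - x)‖ ^ 2 + ‖(mu : ℂ) * u‖ ^ 2 + ‖(nu : ℂ) * v‖ ^ 2 ≤
      2 * mu * nu * x - mu ^ 2 * nu ^ 2 / lam ^ 2) :
    u * v = ((x - mu * nu / lam ^ 2 : ℝ) : ℂ) := by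
  rw [fTerm_eq_min_add_sos hlam] at h
  have hnorm_nonneg : 0 ≤ lam ^ 2 * (‖u * v‖ - (x - mu * nu / lam ^ 2)) ^ 2 := by positivity
  have hcross_nonneg : 0 ≤ (mu * ‖u‖ - nu * ‖v‖) ^ 2 := sq_nonneg _
  have hre_nonneg : 0 ≤ 2 * lam ^ 2 * x * (‖u * v‖ - (u * v).re) :=
    mul_nonneg (by positivity) (sub_nonneg.2 (re_le_norm _))
  have hnorm : lam ^ 2 * (‖u * v‖ - (x - mu * nu / lam ^ 2)) ^ 2 = 0 := by linarith
  have hre : 2 * lam ^ 2 * x * (‖u * v‖ - (u * v).re) = 0 := by linarith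
  simp only [mul_eq_zero, pow_eq_zero_iff, ne_eq, OfNat.ofNat_ne_zero, not_false_eq_true,
    hlam, hx.ne', sub_eq_zero, false_or] at hnorm hre
  rw [eq_ofReal_norm_of_re_eq_norm hre.symm, hnorm]

theorem mz2_differentiableAt {lam mu nu m a b M : ℝ} {W : (Fin 7 → ℂ) → ℂ}
    (hW : ∀ z, W z = (lam : ℂ) * z 0 * (z 3 * z 4 - (m : ℂ) ^ 2) +
      (mu : ℂ) * z 1 * z 3 + (nu : ℂ) * z 2 * z 4 + (a : ℂ) * (z 4) ^ 2 * z 5 +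
      (b : ℂ) * z 3 * z 5 * z 6 + (M : ℂ) * (z 6) ^ 2) (z : Fin 7 → ℂ) :
    DifferentiableAt ℂ W z := by
  rw [funext hW]
  fun_prop

theorem mz2_fderiv_single {lam mu nu m a b M : ℝ} {W : (Fin 7 → ℂ) → ℂ}
    (hW : ∀ z, W z = (lam : ℂ) * z 0 * (z 3 * z 4 - (m : ℂ) ^ 2) +
      (mu : ℂ) * z 1 * z 3 + (nu : ℂ) * z 2 * z 4 + (a : ℂ) * (z 4) ^ 2 * z 5 +
      (b : ℂ) * z 3 * z 5 * z 6 + (M : ℂ) * (z 6) ^ 2) (z : Fin 7 → ℂ) :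
    fderiv ℂ W z (Pi.single 0 1) = lam * (z 3 * z 4 - ((m ^ 2 : ℝ) : ℂ)) ∧
      fderiv ℂ W z (Pi.single 1 1) = mu * z 3 ∧ fderiv ℂ W z (Pi.single 2 1) = nu * z 4 := by
  refine ⟨?_, ?_, ?_⟩ <;> refine fderiv_apply_eq_of_add_smul (mz2_differentiableAt hW z) ?_ <;>
    intro t <;> simp [hW] <;> ring

theorem Mz2_R_broken_on_all_vacua_general
    (lam mu nu m a b M : ℝ)
    (hlam : 0 < lam) (hm : 0 < m)
    (hcond : mu * nu < lam ^ 2 * m ^ 2)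
    (W : (Fin 7 → ℂ) → ℂ)
    (hW : ∀ z, W z = (lam : ℂ) * z 0 * (z 3 * z 4 - (m : ℂ) ^ 2) +
      (mu : ℂ) * z 1 * z 3 + (nu : ℂ) * z 2 * z 4 + (a : ℂ) * (z 4) ^ 2 * z 5 +
      (b : ℂ) * z 3 * z 5 * z 6 + (M : ℂ) * (z 6) ^ 2)
    (V : (Fin 7 → ℂ) → ℝ)
    (hV : ∀ z, V z = ∑ i, ‖fderiv ℂ W z (Pi.single i 1)‖ ^ 2) :
    ∀ z : Fin 7 → ℂ, V z = 2 * mu * nu * m ^ 2 - mu ^ 2 * nu ^ 2 / lam ^ 2 →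
      z 3 ≠ 0 ∧ z 4 ≠ 0 ∧
      z 3 * z 4 = ((m ^ 2 - mu * nu / lam ^ 2 : ℝ) : ℂ) ∧
      ((m ^ 2 - mu * nu / lam ^ 2 : ℝ) : ℂ) ≠ 0 := by
  intro z hz
  obtain ⟨h0, h1, h2⟩ := mz2_fderiv_single hW z
  have hfterm_le : ‖(lam : ℂ) * (z 3 * z 4 - ((m ^ 2 : ℝ) : ℂ))‖ ^ 2 + ‖(mu : ℂ) * z 3‖ ^ 2 +
      ‖(nu : ℂ) * z 4‖ ^ 2 ≤ V z := by
    rw [hV, Fin.sum_univ_seven, h0, h1, h2]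
    have := fun i : Fin 7 => sq_nonneg ‖fderiv ℂ W z (Pi.single i 1)‖
    linarith [this 3, this 4, this 5, this 6]
  have hprod := mul_eq_of_fTerm_le hlam.ne' (by positivity) (hfterm_le.trans hz.le)
  have hne : ((m ^ 2 - mu * nu / lam ^ 2 : ℝ) : ℂ) ≠ 0 :=
    ofReal_ne_zero.2 (sub_pos.2 ((div_lt_iff₀ (by positivity)).2 (by linarith))).ne'
  exact ⟨left_ne_zero_of_mul (hprod ▸ hne), right_ne_zero_of_mul (hprod ▸ hne), hprod, hne⟩

/-- `Mz²` model with `μν < λ²m²`. Every global minimizer of `V`, i.e.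
every `z ∈ ℂ⁷` with `V(z) = 2μνm² − μ²ν²/λ²`, satisfies `z₄ ≠ 0` and `z₅ ≠ 0` (equality in
the lower bound forces `z₄z₅ = m² − μν/λ² ≠ 0`); hence the R-symmetry, under which `z₄` and
`z₅` carry nonzero R-charges, is spontaneously broken at every point of the vacuum space. -/
theorem Mz2_R_broken_on_all_vacua
    (lam mu nu m a b M : ℝ)
    (hlam : 0 < lam) (hmu : 0 < mu) (hnu : 0 < nu) (hm : 0 < m)
    (ha : 0 < a) (hb : 0 < b) (hM : 0 < M)
    (hcond : mu * nu < lam ^ 2 * m ^ 2)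
    (W : (Fin 7 → ℂ) → ℂ)
    (hW : ∀ z, W z = (lam : ℂ) * z 0 * (z 3 * z 4 - (m : ℂ) ^ 2) +
      (mu : ℂ) * z 1 * z 3 + (nu : ℂ) * z 2 * z 4 + (a : ℂ) * (z 4) ^ 2 * z 5 +
      (b : ℂ) * z 3 * z 5 * z 6 + (M : ℂ) * (z 6) ^ 2)
    (V : (Fin 7 → ℂ) → ℝ)
    (hV : ∀ z, V z = ∑ i, ‖fderiv ℂ W z (Pi.single i 1)‖ ^ 2) :
    ∀ z : Fin 7 → ℂ, V z = 2 * mu * nu * m ^ 2 - mu ^ 2 * nu ^ 2 / lam ^ 2 →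
      z 3 ≠ 0 ∧ z 4 ≠ 0 ∧
      z 3 * z 4 = ((m ^ 2 - mu * nu / lam ^ 2 : ℝ) : ℂ) ∧
      ((m ^ 2 - mu * nu / lam ^ 2 : ℝ) : ℂ) ≠ 0 :=
  Mz2_R_broken_on_all_vacua_general lam mu nu m a b M hlam hm hcond W hW V hV
end
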